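/- (seq_comp_caps) For Kleisli morphisms f : A → itree E B and g : B → itree E C and capability sets caps1, caps2: if for a given a : A one has within_caps caps1 (f a), and for every b : B one has within_caps caps2 (g b), then within_caps (cap_union caps1 caps2) ((f >=> g) a), where (f >=> g) a := f a >>= g. -/

import Mathlib

/-!
`bind t k` stays within `caps` when `t` and every `k a` do: the trees of the form `bind u k`
with `u` within `caps`, together with the trees within `caps`, form a post-fixed point of
`withinCapsF`, since unfolding `bind` exposes either a constructor of `u` or, at a leaf
`Ret r`, the tree `k r`. The theorem then follows by enlarging `caps1` and `caps2` to their union.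
-/

/-- The polynomial functor whose final coalgebra is the type of interaction trees. -/
def ITreePF (E : Type → Type) (R : Type) : PFunctor.{1} :=
  ⟨ULift.{1} R ⊕ (PUnit.{2} ⊕ Σ X : Type, E X),
   fun a =>
     match a with
     | Sum.inl _ => PEmpty.{2}
     | Sum.inr (Sum.inl _) => PUnit.{2}
     | Sum.inr (Sum.inr p) => ULift.{1} p.1⟩

/-- Interaction trees, defined coinductively as the M-type of `ITreePF`. -/
def ITree (E : Type → Type) (R : Type) : Type 1 := PFunctor.M (ITreePF E R)

namespace ITree

variable {E : Type → Type} {R A B : Type}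

/-- Pure value leaf. -/
def Ret (r : R) : ITree E R :=
  PFunctor.M.mk ⟨Sum.inl ⟨r⟩, fun e => e.elim⟩

/-- Silent step. -/
def Tau (t : ITree E R) : ITree E R :=
  PFunctor.M.mk ⟨Sum.inr (Sum.inl PUnit.unit), fun _ => t⟩

/-- Visible event with continuation. -/
def Vis {X : Type} (e : E X) (k : X → ITree E R) : ITree E R :=
  PFunctor.M.mk ⟨Sum.inr (Sum.inr ⟨X, e⟩), fun x => k x.down⟩

/-- Monadic bind: replace every `Ret r` leaf of `t` by `k r`, by corecursion. -/
def bind (t : ITree E A) (k : A → ITree E B) : ITree E B :=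
  PFunctor.M.corec
    (fun s : ITree E A ⊕ ITree E B =>
      match s with
      | Sum.inl t =>
        match PFunctor.M.dest t with
        | ⟨Sum.inl r, _⟩ =>
          let d := PFunctor.M.dest (k r.down)
          ⟨d.1, fun b => Sum.inr (d.2 b)⟩
        | ⟨Sum.inr (Sum.inl _), f⟩ =>
          ⟨Sum.inr (Sum.inl PUnit.unit), fun b => Sum.inl (f b)⟩
        | ⟨Sum.inr (Sum.inr p), f⟩ =>
          ⟨Sum.inr (Sum.inr p), fun b => Sum.inl (f b)⟩
      | Sum.inr u =>
        let d := PFunctor.M.dest u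
        ⟨d.1, fun b => Sum.inr (d.2 b)⟩)
    (Sum.inl t)

end ITree

/-- Capability sets as characteristic functions. -/
def CapSet (Capability : Type) : Type := Capability → Bool

def cap_empty {Capability : Type} : CapSet Capability := fun _ => false

def cap_full {Capability : Type} : CapSet Capability := fun _ => true

def cap_union {Capability : Type} (s1 s2 : CapSet Capability) : CapSet Capability :=
  fun c => s1 c || s2 c

/-- An event is within `caps` if it needs no capability, or its required capability is in `caps`. -/
def directive_in_caps {E : Type → Type} {Capability : Type}
    (req : ∀ X : Type, E X → Option Capability) (caps : CapSet Capability)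
    {X : Type} (e : E X) : Prop :=
  req X e = none ∨ ∃ c, req X e = some c ∧ caps c = true

/-- One step of the `within_caps` generating functor. -/
def withinCapsF {E : Type → Type} {Capability : Type}
    (req : ∀ X : Type, E X → Option Capability) (caps : CapSet Capability)
    {R : Type} (P : ITree E R → Prop) (t : ITree E R) : Prop :=
  (∃ r, t = ITree.Ret r) ∨
  (∃ t', t = ITree.Tau t' ∧ P t') ∨
  (∃ (X : Type) (e : E X) (k : X → ITree E R),
      t = ITree.Vis e k ∧ directive_in_caps req caps e ∧ ∀ x, P (k x))

/-- `within_caps caps t`: greatest fixed point of `withinCapsF`, i.e. `t` belongs to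
some postfixed point of the generating functor. -/
def within_caps {E : Type → Type} {Capability : Type}
    (req : ∀ X : Type, E X → Option Capability) (caps : CapSet Capability)
    {R : Type} (t : ITree E R) : Prop :=
  ∃ P : ITree E R → Prop, (∀ t', P t' → withinCapsF req caps P t') ∧ P t

/-- Kleisli composition of morphisms into interaction trees. -/
def kcomp {E : Type → Type} {A B C : Type}
    (f : A → ITree E B) (g : B → ITree E C) : A → ITree E C :=
  fun a => ITree.bind (f a) g


namespace ITree

variable {E : Type → Type} {A B : Type}

/-- The step function of the corecursion in `ITree.bind`: a left summand is a node of the tree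
still being traversed, a right summand a node of a continuation `k r`, which is copied. -/
def bindStep (k : A → ITree E B) :
    ITree E A ⊕ ITree E B → (ITreePF E B).Obj (ITree E A ⊕ ITree E B)
  | Sum.inl t =>
    match PFunctor.M.dest t with
    | ⟨Sum.inl r, _⟩ =>
      let d := PFunctor.M.dest (k r.down)
      ⟨d.1, fun b => Sum.inr (d.2 b)⟩
    | ⟨Sum.inr (Sum.inl _), f⟩ =>
      ⟨Sum.inr (Sum.inl PUnit.unit), fun b => Sum.inl (f b)⟩
    | ⟨Sum.inr (Sum.inr p), f⟩ =>
      ⟨Sum.inr (Sum.inr p), fun b => Sum.inl (f b)⟩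
  | Sum.inr u =>
    let d := PFunctor.M.dest u
    ⟨d.1, fun b => Sum.inr (d.2 b)⟩

theorem bind_eq_corec (t : ITree E A) (k : A → ITree E B) :
    bind t k = PFunctor.M.corec (bindStep k) (Sum.inl t) :=
  rfl

theorem corec_bindStep_inr (k : A → ITree E B) (u : ITree E B) :
    PFunctor.M.corec (bindStep k) (Sum.inr u) = u := by
  refine PFunctor.M.bisim (fun x y => x = PFunctor.M.corec (bindStep k) (Sum.inr y)) ?_ _ _ rfl
  rintro _ y rfl
  exact ⟨_, _, (PFunctor.M.dest y).2, PFunctor.M.dest_corec _ _, rfl, fun _ => rfl⟩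

theorem bind_ret (r : A) (k : A → ITree E B) : bind (Ret r) k = k r := by
  rw [← PFunctor.M.mk_dest (k r), bind_eq_corec, PFunctor.M.corec_def]
  exact congrArg PFunctor.M.mk
    (Sigma.ext rfl (heq_of_eq (funext fun _ => corec_bindStep_inr k _)))

theorem bind_tau (t : ITree E A) (k : A → ITree E B) : bind (Tau t) k = Tau (bind t k) := by
  rw [bind_eq_corec, PFunctor.M.corec_def]
  rfl

theorem bind_vis {X : Type} (e : E X) (h : X → ITree E A) (k : A → ITree E B) :
    bind (Vis e h) k = Vis e fun x => bind (h x) k := by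
  rw [bind_eq_corec, PFunctor.M.corec_def]
  rfl

end ITree

section WithinCaps

variable {E : Type → Type} {Capability : Type} {req : ∀ X : Type, E X → Option Capability}
  {caps caps' : CapSet Capability}

theorem cap_union_of_left {s1 s2 : CapSet Capability} {c : Capability} (h : s1 c = true) :
    cap_union s1 s2 c = true := by
  simp [cap_union, h]

theorem cap_union_of_right {s1 s2 : CapSet Capability} {c : Capability} (h : s2 c = true) :
    cap_union s1 s2 c = true := by
  simp [cap_union, h]

theorem directive_in_caps.mono (hcaps : ∀ c, caps c = true → caps' c = true) {X : Type}
    {e : E X} : directive_in_caps req caps e → directive_in_caps req caps' e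
  | Or.inl hnone => Or.inl hnone
  | Or.inr ⟨c, hreq, hc⟩ => Or.inr ⟨c, hreq, hcaps c hc⟩

theorem withinCapsF.mono {R : Type} {P Q : ITree E R → Prop}
    (hcaps : ∀ c, caps c = true → caps' c = true) (hPQ : ∀ t, P t → Q t) {t : ITree E R} :
    withinCapsF req caps P t → withinCapsF req caps' Q t
  | Or.inl hret => Or.inl hret
  | Or.inr (Or.inl ⟨t', ht, hP⟩) => Or.inr (Or.inl ⟨t', ht, hPQ t' hP⟩)
  | Or.inr (Or.inr ⟨X, e, k, ht, he, hP⟩) =>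
    Or.inr (Or.inr ⟨X, e, k, ht, he.mono hcaps, fun x => hPQ _ (hP x)⟩)

theorem within_caps.coinduct {R : Type} (P : ITree E R → Prop)
    (hP : ∀ t, P t → withinCapsF req caps P t) {t : ITree E R} (ht : P t) :
    within_caps req caps t :=
  ⟨P, hP, ht⟩

theorem within_caps.unfold {R : Type} {t : ITree E R} (h : within_caps req caps t) :
    withinCapsF req caps (within_caps req caps) t :=
  let ⟨P, hP, ht⟩ := h
  (hP t ht).mono (fun _ => id) fun _ ht' => ⟨P, hP, ht'⟩

theorem within_caps.mono {R : Type} (hcaps : ∀ c, caps c = true → caps' c = true)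
    {t : ITree E R} (h : within_caps req caps t) : within_caps req caps' t :=
  within_caps.coinduct (within_caps req caps) (fun _ ht => ht.unfold.mono hcaps fun _ => id) h

theorem within_caps_bind {A B : Type} {t : ITree E A} {k : A → ITree E B}
    (ht : within_caps req caps t) (hk : ∀ a, within_caps req caps (k a)) :
    within_caps req caps (t.bind k) := by
  refine within_caps.coinduct
    (fun s => (∃ u, within_caps req caps u ∧ s = u.bind k) ∨ within_caps req caps s)
    ?_ (Or.inl ⟨t, ht, rfl⟩)
  rintro s (⟨u, hu, rfl⟩ | hs)
  · rcases hu.unfold with ⟨r, rfl⟩ | ⟨u', rfl, hu'⟩ | ⟨X, e, h, rfl, he, hh⟩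
    · rw [ITree.bind_ret]
      exact (hk r).unfold.mono (fun _ => id) fun _ => Or.inr
    · rw [ITree.bind_tau]
      exact Or.inr (Or.inl ⟨_, rfl, Or.inl ⟨u', hu', rfl⟩⟩)
    · rw [ITree.bind_vis]
      exact Or.inr (Or.inr ⟨X, e, _, rfl, he, fun x => Or.inl ⟨h x, hh x, rfl⟩⟩)
  · exact hs.unfold.mono (fun _ => id) fun _ => Or.inr

end WithinCaps

/-- seq_comp_caps: sequential composition is within the union of capability sets. -/
theorem seq_comp_caps {E : Type → Type} {Capability : Type}
    (req : ∀ X : Type, E X → Option Capability)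
    {A B C : Type} (caps1 caps2 : CapSet Capability)
    (f : A → ITree E B) (g : B → ITree E C) (a : A)
    (hf : within_caps req caps1 (f a))
    (hg : ∀ b : B, within_caps req caps2 (g b)) :
    within_caps req (cap_union caps1 caps2) (kcomp f g a) :=
  within_caps_bind (hf.mono fun _ => cap_union_of_left)
    fun b => (hg b).mono fun _ => cap_union_of_right
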